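/- If an infinite word w satisfies limsup_{n→∞} inrc_w(n)/n < 1/(1+φ²), where φ is the golden ratio, then w is ultimately periodic. -/
import Mathlib


open Filter
open scoped ENNReal

/-- The set of `m` such that the first `m` length-`n` factors of `x`
are pairwise distinct. -/
def inrcSet {α : Type*} (x : ℕ → α) (n : ℕ) : Set ℕ :=
  {m | ∀ i < m, ∀ j < m, (∀ d < n, x (i + d) = x (j + d)) → i = j}

/-- The initial non-repetitive complexity. -/
noncomputable def inrc {α : Type*} (x : ℕ → α) (n : ℕ) : ℕ := sSup (inrcSet x n)

/-- Fine–Wilf style lemma: two "periods" on a window give the gcd period. -/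
private lemma fw_aux {α : Type*} (f : ℕ → α) :
    ∀ s p q L, p + q ≤ s → p ≤ L → q ≤ L →
      (∀ t < L, f (t + p) = f t) → (∀ t < L, f (t + q) = f t) →
      ∀ t < L, f (t + Nat.gcd p q) = f t := by
  intro s
  induction s with
  | zero =>
    intro p q L hs hp hq Hp Hq t ht
    have hp0 : p = 0 := by omega
    have hq0 : q = 0 := by omega
    subst hp0; subst hq0
    simpa using Hp t ht
  | succ s ih =>
    intro p q L hs hp hq Hp Hq
    rcases Nat.eq_zero_or_pos q with hq0 | hq0
    · subst hq0; simpa using Hp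
    rcases Nat.eq_zero_or_pos p with hp0 | hp0
    · subst hp0; simpa using Hq
    rcases le_or_gt q p with hqp | hpq
    · -- reduce to (p - q, q)
      have Hp' : ∀ t < L, f (t + (p - q)) = f t := by
        intro t ht
        rcases lt_or_ge (t + (p - q)) L with h1 | h1
        · have e1 := Hq (t + (p - q)) h1
          rw [show t + (p - q) + q = t + p by omega] at e1
          rw [← e1]; exact Hp t ht
        · have htq : q ≤ t := by omega
          have e1 := Hp (t - q) (by omega)
          have e2 := Hq (t - q) (by omega)
          rw [show t - q + p = t + (p - q) by omega] at e1
          rw [show t - q + q = t by omega] at e2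
          rw [e1, e2]
      have hres := ih (p - q) q L (by omega) (by omega) hq Hp' Hq
      intro t ht
      rw [show Nat.gcd p q = Nat.gcd (p - q) q from (Nat.gcd_sub_self_left hqp).symm]
      exact hres t ht
    · -- reduce to (p, q - p)
      have Hq' : ∀ t < L, f (t + (q - p)) = f t := by
        intro t ht
        rcases lt_or_ge (t + (q - p)) L with h1 | h1
        · have e1 := Hp (t + (q - p)) h1
          rw [show t + (q - p) + p = t + q by omega] at e1
          rw [← e1]; exact Hq t ht
        · have htp : p ≤ t := by omega
          have e1 := Hq (t - p) (by omega)
          have e2 := Hp (t - p) (by omega)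
          rw [show t - p + q = t + (q - p) by omega] at e1
          rw [show t - p + p = t by omega] at e2
          rw [e1, e2]
      have hres := ih p (q - p) L (by omega) hp (by omega) Hp Hq'
      intro t ht
      rw [show Nat.gcd p q = Nat.gcd p (q - p) from (Nat.gcd_sub_self_right hpq.le).symm]
      exact hres t ht

/-- Extension lemma: a period `g` dividing `q` that holds on a long enough
subwindow of a `q`-periodic interval holds on the whole interval. -/
private lemma ext_aux {α : Type*} (x : ℕ → α) (q g a b u w : ℕ)
    (hq : 0 < q) (hg : g ∣ q) (hau : a ≤ u) (hub : u + w ≤ b) (hwq : q ≤ w)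
    (H : ∀ t, a ≤ t → t < b → x (t + q) = x t)
    (W : ∀ t, u ≤ t → t < u + w → x (t + g) = x t) :
    ∀ t, a ≤ t → t < b → x (t + g) = x t := by
  have hgq : g ≤ q := Nat.le_of_dvd hq hg
  -- extend window down to `a`
  have A : ∀ k t, a ≤ t → t < u + w → u ≤ t + k → x (t + g) = x t := by
    intro k
    induction k with
    | zero =>
      intro t h1 h2 h3
      exact W t (by omega) h2
    | succ k ihk =>
      intro t h1 h2 h3
      rcases le_or_gt u t with hut | hut
      · exact W t hut h2
      · have e1 : x (t + g + q) = x (t + g) := H (t + g) (by omega) (by omega)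
        have e2 : x (t + q) = x t := H t h1 (by omega)
        have e3 : x (t + q + g) = x (t + q) := ihk (t + q) (by omega) (by omega) (by omega)
        calc x (t + g) = x (t + g + q) := e1.symm
          _ = x (t + q + g) := by ring_nf
          _ = x (t + q) := e3
          _ = x t := e2
  -- extend upward to `b`
  intro t
  induction t using Nat.strong_induction_on with
  | _ t ihd =>
    intro h1 h2
    rcases lt_or_ge t (u + w) with hcase | hcase
    · exact A u t h1 hcase (by omega)
    · have hs : u ≤ t - q := by omega
      have e1 : x (t - q + q) = x (t - q) := H (t - q) (by omega) (by omega)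
      have e2 : x (t - q + g + q) = x (t - q + g) := H (t - q + g) (by omega) (by omega)
      have e3 : x (t - q + g) = x (t - q) := ihd (t - q) (by omega) (by omega) (by omega)
      calc x (t + g) = x (t - q + g + q) := by rw [show t - q + g + q = t + g by omega]
        _ = x (t - q + g) := e2
        _ = x (t - q) := e3
        _ = x (t - q + q) := e1.symm
        _ = x t := by rw [show t - q + q = t by omega]

/-- For each `n`, there is a period `p ≤ inrc x n` valid on `[inrc x n, n)`. -/
private lemma period_of_inrc {α : Type*} [Fintype α] (x : ℕ → α) (n : ℕ) :
    ∃ p, 0 < p ∧ p ≤ inrc x n ∧ ∀ t, inrc x n ≤ t → t < n → x (t + p) = x t := by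
  have hbdd : BddAbove (inrcSet x n) := by
    refine ⟨Fintype.card α ^ n, fun m' hm' => ?_⟩
    have hinj : Function.Injective (fun i : Fin m' => fun d : Fin n => x (i + d)) := by
      intro i j hij
      refine Fin.ext (hm' i i.2 j j.2 fun d hd => ?_)
      exact congrFun hij ⟨d, hd⟩
    calc m' = Fintype.card (Fin m') := (Fintype.card_fin m').symm
      _ ≤ Fintype.card (Fin n → α) := Fintype.card_le_of_injective _ hinj
      _ = Fintype.card α ^ n := by simp
  set m := inrc x n with hm
  have hnot : m + 1 ∉ inrcSet x n := fun hmem => by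
    have h2 : m + 1 ≤ m := by simpa [hm, inrc] using le_csSup hbdd hmem
    omega
  simp only [inrcSet, Set.mem_setOf_eq] at hnot
  push_neg at hnot
  obtain ⟨i, hi, j, hj, hagree, hne⟩ := hnot
  have main : ∀ i j : ℕ, i < j → j ≤ m → (∀ d < n, x (i + d) = x (j + d)) →
      ∃ p, 0 < p ∧ p ≤ m ∧ ∀ t, m ≤ t → t < n → x (t + p) = x t := by
    intro i j hij hjm hag
    refine ⟨j - i, by omega, by omega, fun t ht htn => ?_⟩
    have hd := hag (t - i) (by omega)
    rw [show i + (t - i) = t by omega] at hd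
    rw [show t + (j - i) = j + (t - i) by omega, ← hd]
  rcases Nat.lt_or_ge i j with hij | hij
  · exact main i j hij (by omega) hagree
  · exact main j i (by omega) (by omega) (fun d hd => (hagree d hd).symm)

/-- The chain of gcd periods. -/
private def gchain (p : ℕ → ℕ) (N0 : ℕ) : ℕ → ℕ
  | 0 => p N0
  | k + 1 => Nat.gcd (gchain p N0 k) (p (N0 + k + 1))

/-- if limsup inrc_w(n)/n < 1/(1+φ²), where φ is the golden
ratio, then w is ultimately periodic. -/
theorem inrc_small_limsup_ultimatelyPeriodic {α : Type*} [Fintype α] (x : ℕ → α)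
    (h : limsup (fun n => (inrc x n : ℝ≥0∞) / (n : ℝ≥0∞)) atTop
        < ENNReal.ofReal (1 / (1 + ((1 + Real.sqrt 5) / 2) ^ 2))) :
    ∃ p > 0, ∃ N, ∀ i ≥ N, x (i + p) = x i := by
  -- numeric bound on the golden-ratio constant
  have hsq : Real.sqrt 5 ^ 2 = 5 := Real.sq_sqrt (by norm_num)
  have h5 : (2.15 : ℝ) ≤ Real.sqrt 5 := by
    nlinarith [Real.sqrt_nonneg 5]
  have hT : (1 : ℝ) / (1 + ((1 + Real.sqrt 5) / 2) ^ 2) ≤ 7 / 25 := by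
    have hden : (0:ℝ) < 1 + ((1 + Real.sqrt 5) / 2) ^ 2 := by positivity
    rw [div_le_div_iff₀ hden (by norm_num)]
    nlinarith [h5]
  -- eventual bound 25 * inrc x n ≤ 7 * n
  have hev : ∀ᶠ n in atTop,
      (inrc x n : ℝ≥0∞) / (n : ℝ≥0∞)
        < ENNReal.ofReal (1 / (1 + ((1 + Real.sqrt 5) / 2) ^ 2)) :=
    eventually_lt_of_limsup_lt h
  have hev2 : ∀ᶠ n : ℕ in atTop, 25 * inrc x n ≤ 7 * n := by
    filter_upwards [hev, eventually_ge_atTop 1] with n hn hn1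
    have hlt : (inrc x n : ℝ≥0∞) / (n : ℝ≥0∞) < ENNReal.ofReal (7 / 25) :=
      hn.trans_le (ENNReal.ofReal_le_ofReal hT)
    have hn0 : (n : ℝ≥0∞) ≠ 0 := Nat.cast_ne_zero.mpr (by omega)
    rw [ENNReal.div_lt_iff (Or.inl hn0) (Or.inl (ENNReal.natCast_ne_top n))] at hlt
    have hcast : (ENNReal.ofReal (7 / 25) * (n : ℝ≥0∞)) = ENNReal.ofReal (7 / 25 * n) := by
      rw [ENNReal.ofReal_mul (by norm_num), ENNReal.ofReal_natCast]
    rw [hcast] at hlt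
    have hreal : (inrc x n : ℝ) < 7 / 25 * n := by
      have := (ENNReal.lt_ofReal_iff_toReal_lt (ENNReal.natCast_ne_top _)).mp hlt
      simpa using this
    have : (25 : ℝ) * (inrc x n : ℝ) ≤ 7 * n := by nlinarith
    exact_mod_cast this
  obtain ⟨N1, hN1⟩ := eventually_atTop.mp hev2
  set N0 := max N1 2 with hN0def
  have hN02 : 2 ≤ N0 := le_max_right _ _
  have hb : ∀ n, N0 ≤ n → 25 * inrc x n ≤ 7 * n := fun n hn =>
    hN1 n (le_trans (le_max_left _ _) hn)
  -- choose periods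
  choose p hp1 hp2 hp3 using fun n => period_of_inrc x n
  set G : ℕ → ℕ := gchain p N0 with hGdef
  have hGsucc : ∀ k, G (k + 1) = Nat.gcd (G k) (p (N0 + k + 1)) := fun k => rfl
  have claim : ∀ k, 0 < G k ∧ 25 * G k ≤ 7 * N0 ∧
      ∀ t, inrc x (N0 + k) ≤ t → t < N0 + k → x (t + G k) = x t := by
    intro k
    induction k with
    | zero =>
      have hbn := hb N0 le_rfl
      have h2 := hp2 N0
      have hG0 : G 0 = p N0 := rfl
      refine ⟨by rw [hG0]; exact hp1 N0, by omega, ?_⟩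
      intro t h1 h2'
      rw [hG0]
      exact hp3 N0 t (by simpa using h1) (by omega)
    | succ k ih =>
      obtain ⟨hGpos, hGle, hGper⟩ := ih
      set n := N0 + k with hndef
      have hbn := hb n (by omega)
      have hbn1 := hb (n + 1) (by omega)
      have hpb := hp2 (n + 1)
      set M := max (inrc x n) (inrc x (n + 1)) with hMdef
      have hMc := max_choice (inrc x n) (inrc x (n + 1))
      have hMn : 25 * M ≤ 7 * (n + 1) := by rcases hMc with h' | h' <;> omega
      have hL1 : G k + M ≤ n := by omega
      have hL2 : p (n + 1) + M ≤ n := by omega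
      have H1 : ∀ t < n - M, (fun t => x (M + t)) (t + G k) = (fun t => x (M + t)) t := by
        intro t ht
        have := hGper (M + t) (le_trans (le_max_left _ _) (Nat.le_add_right _ _)) (by omega)
        simpa [Nat.add_assoc] using this
      have H2 : ∀ t < n - M, (fun t => x (M + t)) (t + p (n + 1)) = (fun t => x (M + t)) t := by
        intro t ht
        have := hp3 (n + 1) (M + t) (le_trans (le_max_right _ _) (Nat.le_add_right _ _))
          (by omega)
        simpa [Nat.add_assoc] using this
      have FW := fw_aux (fun t => x (M + t)) (G k + p (n + 1)) (G k) (p (n + 1)) (n - M)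
        le_rfl (by omega) (by omega) H1 H2
      have hgsucc : G (k + 1) = Nat.gcd (G k) (p (n + 1)) := hGsucc k
      have hGpos' : 0 < G (k + 1) := by
        rw [hgsucc]; exact Nat.gcd_pos_of_pos_left _ hGpos
      have hGdvd : G (k + 1) ∣ p (n + 1) := by
        rw [hgsucc]; exact Nat.gcd_dvd_right _ _
      have hGle' : G (k + 1) ≤ G k :=
        Nat.le_of_dvd hGpos (hgsucc ▸ Nat.gcd_dvd_left _ _)
      have W : ∀ t, M ≤ t → t < M + (n - M) → x (t + G (k + 1)) = x t := by
        intro t ht htn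
        have := FW (t - M) (by omega)
        rw [show M + (t - M + Nat.gcd (G k) (p (n + 1))) = t + Nat.gcd (G k) (p (n + 1)) by omega,
          show M + (t - M) = t by omega] at this
        rw [hgsucc]
        exact this
      have Hext := ext_aux x (p (n + 1)) (G (k + 1)) (inrc x (n + 1)) (n + 1) M (n - M)
        (hp1 (n + 1)) hGdvd (le_max_right _ _) (by omega) (by omega) (hp3 (n + 1)) W
      exact ⟨hGpos', by omega, fun t h1 h2 => Hext t h1 (by omega)⟩
  -- the gcd chain stabilizes
  have hanti : ∀ k, G (k + 1) ≤ G k := fun k =>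
    Nat.le_of_dvd (claim k).1 ((hGsucc k) ▸ Nat.gcd_dvd_left _ _)
  have hmono : Antitone G := antitone_nat_of_succ_le hanti
  obtain ⟨k0, hk0⟩ := Nat.sInf_mem (s := Set.range G) ⟨G 0, 0, rfl⟩
  have hstab : ∀ k, k0 ≤ k → G k = sInf (Set.range G) := fun k hk =>
    le_antisymm (hk0 ▸ hmono hk) (Nat.sInf_le ⟨k, rfl⟩)
  refine ⟨sInf (Set.range G), by rw [← hk0]; exact (claim k0).1, N0 + k0 + 1, fun i hi => ?_⟩
  have hk : k0 ≤ i + 1 - N0 := by omega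
  set k := i + 1 - N0 with hkdef
  have hnk : N0 + k = i + 1 := by omega
  have hcl := (claim k).2.2
  rw [hnk] at hcl
  have hbi := hb (i + 1) (by omega)
  have hi' : inrc x (i + 1) ≤ i := by omega
  have := hcl i hi' (by omega)
  rwa [hstab k hk] at this
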